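/- arXiv:2109.15243 — 4 statements merged into one kernel-verified Lean document; each statement's English description precedes it below -/
import Mathlib

section
/- For every positive integer n, h_{2n+1} = t_{2n+1} · h_{2n-2}. -/
/-! Unfolding the recurrence twice gives
`h (2k+3) = t (2k+3) t (2k+2) h (2k+1) + t (2k+3) h (2k) + h (2k+1)`, and the two `h (2k+1)` terms
cancel because consecutive values `t (2m)`, `t (2m+1)` have opposite signs. -/

def t (n : ℕ) : ℤ := (-1) ^ ((Nat.digits 2 n).sum)

def h : ℕ → ℤ
  | 0 => 0
  | 1 => 1
  | (n + 2) => t (n + 2) * h (n + 1) + h n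

lemma t_two_mul (m : ℕ) : t (2 * m) = t m := by
  rcases m.eq_zero_or_pos with rfl | hm
  · rfl
  · simp only [t, Nat.digits_base_mul one_lt_two hm, List.sum_cons, zero_add]

lemma t_two_mul_add_one (m : ℕ) : t (2 * m + 1) = -t m := by
  rw [t, add_comm, Nat.digits_add 2 one_lt_two 1 m one_lt_two (Or.inl one_ne_zero),
    List.sum_cons, pow_add, pow_one, neg_one_mul, t]

lemma t_mul_self (n : ℕ) : t n * t n = 1 := by
  rw [t, ← pow_add, Even.neg_one_pow ⟨_, rfl⟩]

lemma t_two_mul_mul_t_two_mul_add_one (m : ℕ) : t (2 * m) * t (2 * m + 1) = -1 := by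
  rw [t_two_mul, t_two_mul_add_one, mul_neg, t_mul_self]

lemma h_two_mul_add_three (k : ℕ) : h (2 * k + 3) = t (2 * k + 3) * h (2 * k) := by
  have hodd : h (2 * k + 3) = t (2 * k + 3) * h (2 * k + 2) + h (2 * k + 1) := rfl
  have heven : h (2 * k + 2) = t (2 * k + 2) * h (2 * k + 1) + h (2 * k) := rfl
  have ht : t (2 * k + 2) * t (2 * k + 3) = -1 := t_two_mul_mul_t_two_mul_add_one (k + 1)
  rw [hodd, heven]
  linear_combination h (2 * k + 1) * ht

theorem stmt0 : ∀ n : ℕ, 0 < n → h (2 * n + 1) = t (2 * n + 1) * h (2 * n - 2) := by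
  rintro (_ | k) hn
  · exact absurd hn (lt_irrefl 0)
  · rw [show 2 * (k + 1) + 1 = 2 * k + 3 by ring, show 2 * (k + 1) - 2 = 2 * k by omega]
    exact h_two_mul_add_three k
end

section
/- There are infinitely many n ∈ ℕ with h_n > h_{n+1} > h_{n+2} > h_{n+3}. -/
/-!
With `M e = !![e, 1; 1, 0]`, the recurrence reads `(h (m + 1), h m) = M (t (m + 1)) (h m, h (m - 1))`,
so `h` is read off products of the matrices `M (t i)`; let `B k = M (t (2 ^ k - 1)) ⋯ M (t 1)`. Since `t (2 ^ k + j) = -t j` for `j < 2 ^ k` and `M (-e) = -(σ * M e * σ)` with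
`σ = diag (-1, 1)`, one gets `B (k + 2) = -(σ * B (k + 1) * σ) * M (-1) * B (k + 1)`.
From `k = 3` on, `B k = !![a, b; c, d]` satisfies `1 ≤ s * a`, `3 * s * a ≤ c`, `c + d = s * a` and
`det = -1`, where `s = (-1) ^ k`. For even `k` this forces `b < 0` and `d < 2 * b`; as
`b = h (2 ^ k - 1)`, `d = h (2 ^ k - 2)` and `t` equals `-1, 1, 1` at `2 ^ k, 2 ^ k + 1, 2 ^ k + 2`,
the values `h (2 ^ k - 1), …, h (2 ^ k + 2)` are `b > d - b > d > 2 * d - b`.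
-/

lemma t_add_two_pow {k j : ℕ} (hj : j < 2 ^ k) : t (j + 2 ^ k) = -t j := by
  have hlen := (Nat.digits_length_le_iff (by norm_num) j).2 hj
  have hdig := Nat.digits_append_zeroes_append_digits (b := 2)
    (k := k - (Nat.digits 2 j).length) (m := 1) (n := j) (by norm_num) one_pos
  rw [Nat.add_sub_cancel' hlen, mul_one] at hdig
  rw [t, ← hdig]
  simp [t, pow_add]

lemma t_two_pow (k : ℕ) : t (2 ^ k) = -1 := by
  simpa [t] using t_add_two_pow (j := 0) (Nat.two_pow_pos k)

lemma t_one : t 1 = -1 := by norm_num [t]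

lemma t_two : t 2 = -1 := by norm_num [t]

open Matrix

def stepMatrix (e : ℤ) : Matrix (Fin 2) (Fin 2) ℤ := !![e, 1; 1, 0]

def transfer (n : ℕ) : ℕ → Matrix (Fin 2) (Fin 2) ℤ
  | 0 => 1
  | r + 1 => stepMatrix (t (n + r + 1)) * transfer n r

lemma transfer_add (n r s : ℕ) : transfer n (r + s) = transfer (n + r) s * transfer n r := by
  induction s with
  | zero => simp [transfer]
  | succ s ih => rw [← add_assoc, transfer, ih, transfer, add_assoc n r s, mul_assoc]

-- `![0, 1]` plays the role of `(h 0, h (-1))`.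
lemma transfer_mulVec (m : ℕ) : transfer 0 (m + 1) *ᵥ ![0, 1] = ![h (m + 1), h m] := by
  induction m with
  | zero =>
    ext i; fin_cases i <;> simp [transfer, stepMatrix, t_one, h, mulVec, dotProduct]
  | succ m ih =>
    rw [transfer, ← mulVec_mulVec, ih]
    ext i; fin_cases i <;> simp [stepMatrix, h, mulVec, dotProduct]

def signFlip : Matrix (Fin 2) (Fin 2) ℤ := !![-1, 0; 0, 1]

lemma signFlip_mul_self : signFlip * signFlip = 1 := by
  simp [signFlip, one_fin_two]

lemma det_signFlip : signFlip.det = -1 := by simp [signFlip]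

lemma det_stepMatrix (e : ℤ) : (stepMatrix e).det = -1 := by simp [stepMatrix]

lemma stepMatrix_neg (e : ℤ) : stepMatrix (-e) = -(signFlip * stepMatrix e * signFlip) := by
  simp [signFlip, stepMatrix]

lemma transfer_of_neg {n r : ℕ} (hneg : ∀ i, 1 ≤ i → i ≤ r → t (n + i) = -t i) :
    transfer n r = (-1) ^ r • (signFlip * transfer 0 r * signFlip) := by
  induction r with
  | zero => simp [transfer, signFlip_mul_self]
  | succ r ih =>
    rw [transfer, transfer, ih fun i h1 h2 => hneg i h1 (by omega), zero_add,
      show t (n + r + 1) = -t (r + 1) from hneg (r + 1) (by omega) le_rfl, stepMatrix_neg]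
    simp only [pow_succ, mul_smul, Matrix.mul_smul, neg_mul, neg_one_smul]
    simp [mul_assoc, ← mul_assoc signFlip signFlip, signFlip_mul_self]

def block (k : ℕ) : Matrix (Fin 2) (Fin 2) ℤ := transfer 0 (2 ^ k - 1)

lemma block_one : block 1 = stepMatrix (-1) := by
  simp [block, transfer, t_one]

lemma block_add_two (k : ℕ) :
    block (k + 2) = -(signFlip * block (k + 1) * signFlip) * stepMatrix (-1) * block (k + 1) := by
  have hN : 2 ^ (k + 1) = 2 * 2 ^ k := pow_succ' 2 k
  have hpos := Nat.one_le_two_pow (n := k)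
  have hlen : 2 ^ (k + 2) - 1 = 2 ^ (k + 1) + (2 ^ (k + 1) - 1) := by rw [pow_succ, hN]; omega
  have hodd : Odd (2 ^ (k + 1) - 1) := ⟨2 ^ k - 1, by omega⟩
  have hmiddle : transfer 0 (2 ^ (k + 1)) = stepMatrix (-1) * block (k + 1) := by
    have hsucc : 2 ^ (k + 1) = (2 ^ (k + 1) - 1) + 1 := by omega
    rw [← t_two_pow (k + 1), block, hsucc, transfer, zero_add, ← hsucc]
  rw [block, hlen, transfer_add, zero_add, hmiddle,
    transfer_of_neg fun i _ hi => by rw [add_comm]; exact t_add_two_pow (by omega),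
    hodd.neg_one_pow, ← block, neg_one_smul, ← mul_assoc]

def IsGoodBlock (s : ℤ) (B : Matrix (Fin 2) (Fin 2) ℤ) : Prop :=
  1 ≤ s * B 0 0 ∧ 3 * (s * B 0 0) ≤ B 1 0 ∧ B 1 0 + B 1 1 = s * B 0 0 ∧ B.det = -1

lemma doubling_fin_two (a b c d : ℤ) :
    -(signFlip * !![a, b; c, d] * signFlip) * stepMatrix (-1) * !![a, b; c, d] =
      !![a * (a + b - c), b * (a + b) - a * d; c * c - (c + d) * a, c * d - (c + d) * b] := by
  simp only [signFlip, stepMatrix, mul_fin_two, neg_of]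
  ext i j; fin_cases i <;> fin_cases j <;> simp <;> ring

lemma IsGoodBlock.next {s : ℤ} {B : Matrix (Fin 2) (Fin 2) ℤ} (hs : s = 1 ∨ s = -1)
    (hB : IsGoodBlock s B) :
    IsGoodBlock (-s) (-(signFlip * B * signFlip) * stepMatrix (-1) * B) := by
  have hdet' : (-(signFlip * B * signFlip) * stepMatrix (-1) * B).det = -1 := by
    simp [det_neg, det_signFlip, det_stepMatrix, hB.2.2.2]
  obtain ⟨a, b, c, d, rfl⟩ : ∃ a b c d, B = !![a, b; c, d] := ⟨_, _, _, _, eta_fin_two B⟩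
  obtain ⟨h1, h3, hsum, hdet⟩ := hB
  have hsq : (s * a) ^ 2 = a ^ 2 := by rcases hs with rfl | rfl <;> ring
  have hsa : s * a ^ 2 ≤ a ^ 2 := by rcases hs with rfl | rfl <;> nlinarith
  rw [doubling_fin_two] at hdet' ⊢
  refine ⟨?_, ?_, ?_, hdet'⟩ <;>
  simp only [of_apply, cons_val', cons_val_zero, cons_val_one, empty_val', cons_val_fin_one,
    det_fin_two_of] at h1 h3 hsum hdet ⊢
  · obtain rfl : d = s * a - c := by linarith
    have hc : c * (a + b - c) = s * a ^ 2 + 1 - c ^ 2 := by linear_combination -hdet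
    have hc' : c * (a + b - c) ≤ -c := by
      nlinarith [mul_nonneg (sub_nonneg.2 h3) (by linarith : (0 : ℤ) ≤ c + 3 * (s * a) - 1)]
    have : a + b - c ≤ -1 := by nlinarith
    nlinarith
  · obtain rfl : d = s * a - c := by linarith
    have key : c * (c * c - (c + (s * a - c)) * a - 3 * (-s * (a * (a + b - c)))) =
        (c - 3 * (s * a)) * (c ^ 2 - s * a ^ 2) + 3 * (s * a) := by
      linear_combination (-3 * s * a) * hdet
    have hc : 0 < c := by linarith
    have : 0 ≤ (c - 3 * (s * a)) * (c ^ 2 - s * a ^ 2) :=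
      mul_nonneg (by linarith) (by nlinarith [mul_le_mul h3 h3 (by linarith) (by linarith)])
    nlinarith
  · linear_combination (c - a - b) * hsum

lemma isGoodBlock_block_three : IsGoodBlock (-1) (block 3) := by
  have h3 : block 3 = !![-1, 1; 3, -2] := by
    simp [block_add_two, block_one, signFlip, stepMatrix]
  norm_num [IsGoodBlock, h3]

lemma isGoodBlock_block (k : ℕ) : IsGoodBlock ((-1) ^ (k + 1)) (block (k + 3)) := by
  induction k with
  | zero => simpa using isGoodBlock_block_three
  | succ k ih =>
    rw [block_add_two, pow_succ, mul_neg_one]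
    exact ih.next (neg_one_pow_eq_or ℤ _)

lemma IsGoodBlock.entries_lt {B : Matrix (Fin 2) (Fin 2) ℤ} (hB : IsGoodBlock 1 B) :
    B 0 1 < 0 ∧ B 1 1 < 2 * B 0 1 := by
  obtain ⟨h1, h3, hsum, hdet⟩ := hB
  rw [det_fin_two] at hdet
  simp only [one_mul] at h1 h3 hsum
  constructor <;> nlinarith

lemma h_eq_block {K m : ℕ} (hm : 2 ^ K = m + 2) :
    h (m + 1) = block K 0 1 ∧ h m = block K 1 1 := by
  have hblock : block K = transfer 0 (m + 1) := by rw [block, hm]; rfl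
  have hv := transfer_mulVec m
  rw [← hblock] at hv
  exact ⟨by simpa [mulVec, dotProduct] using (congrFun hv 0).symm,
    by simpa [mulVec, dotProduct] using (congrFun hv 1).symm⟩

lemma h_descent {m : ℕ} (h2 : t (m + 2) = -1) (h3 : t (m + 3) = 1) (h4 : t (m + 4) = 1)
    (hneg : h (m + 1) < 0) (hlt : h m < 2 * h (m + 1)) :
    h (m + 1) > h (m + 2) ∧ h (m + 2) > h (m + 3) ∧ h (m + 3) > h (m + 4) := by
  have e2 : h (m + 2) = t (m + 2) * h (m + 1) + h m := by rw [h]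
  have e3 : h (m + 3) = t (m + 3) * h (m + 2) + h (m + 1) := by rw [h]
  have e4 : h (m + 4) = t (m + 4) * h (m + 3) + h (m + 2) := by rw [h]
  rw [h2] at e2
  rw [h3] at e3
  rw [h4] at e4
  exact ⟨by linarith, by linarith, by linarith⟩

lemma h_descent_of_two_pow {j m : ℕ} (hm : 2 ^ (2 * j + 4) = m + 2) :
    h (m + 1) > h (m + 2) ∧ h (m + 2) > h (m + 3) ∧ h (m + 3) > h (m + 4) := by
  have hgood : IsGoodBlock 1 (block (2 * j + 4)) := by
    simpa [pow_succ, pow_mul] using isGoodBlock_block (2 * j + 1)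
  obtain ⟨hneg, hlt⟩ := hgood.entries_lt
  obtain ⟨hb, hd⟩ := h_eq_block hm
  have h16 : 16 ≤ m + 2 := by
    simpa [← hm] using Nat.pow_le_pow_right two_pos (show 4 ≤ 2 * j + 4 by omega)
  have ht (i : ℕ) (hi : i < 4) : t (m + 2 + i) = -t i := by
    rw [add_comm, ← hm]; exact t_add_two_pow (by omega)
  refine h_descent ?_ ?_ ?_ (hb ▸ hneg) (hb ▸ hd ▸ hlt)
  · simpa [t] using ht 0 (by norm_num)
  · simpa [t_one] using ht 1 (by norm_num)
  · simpa [t_two] using ht 2 (by norm_num)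

theorem stmt10 : {n : ℕ | h n > h (n + 1) ∧ h (n + 1) > h (n + 2) ∧ h (n + 2) > h (n + 3)}.Infinite := by
  refine Set.infinite_of_forall_exists_gt fun a => ?_
  have hlt : 2 * a + 4 < 2 ^ (2 * a + 4) := Nat.lt_two_pow_self
  obtain ⟨m, hm⟩ : ∃ m, 2 ^ (2 * a + 4) = m + 2 := ⟨2 ^ (2 * a + 4) - 2, by omega⟩
  exact ⟨m + 1, h_descent_of_two_pow hm, by omega⟩
end

section
/- For every n ∈ ℕ, h_n is even if and only if 3 divides n. -/
/-! Modulo 2 an odd coefficient acts as 1, so the parities of `a n` follow the Fibonacci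
recurrence and repeat the pattern even, odd, odd with period 3. -/

section OddCoefficientRecurrence

variable {a u : ℕ → ℤ} (hu : ∀ n, Odd (u n)) (hrec : ∀ n, a (n + 2) = u n * a (n + 1) + a n)
include hu hrec

theorem even_add_three_iff_of_odd_coeff (n : ℕ) : Even (a (n + 3)) ↔ Even (a n) := by
  rw [hrec (n + 1), hrec n]
  simp only [Int.even_add, Int.even_mul, Int.not_even_iff_odd.mpr (hu _), false_or]
  tauto

theorem even_iff_three_dvd_of_odd_coeff (h0 : a 0 = 0) (h1 : Odd (a 1)) :
    ∀ n, Even (a n) ↔ 3 ∣ n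
  | 0 => by simp [h0]
  | 1 => by simpa using h1
  | 2 => by simpa [hrec 0, h0, Int.not_even_iff_odd] using (hu 0).mul h1
  | n + 3 => by
    rw [even_add_three_iff_of_odd_coeff hu hrec, even_iff_three_dvd_of_odd_coeff h0 h1 n]
    omega

end OddCoefficientRecurrence

theorem odd_t (n : ℕ) : Odd (t n) := odd_neg_one.pow

theorem stmt13 : ∀ n : ℕ, Even (h n) ↔ 3 ∣ n :=
  even_iff_three_dvd_of_odd_coeff (u := fun n => t (n + 2)) (fun n => odd_t (n + 2))
    (fun _ => rfl) rfl odd_one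
end

section
/- For every n ≥ 1, the sum over i from 1 to n of t_i · h_{2i-1} equals h_{2n}. -/
lemma h_two_mul_add_two (m : ℕ) : h (2 * m + 2) = t (m + 1) * h (2 * m + 1) + h (2 * m) := by
  rw [h, show 2 * m + 2 = 2 * (m + 1) by ring, t_two_mul]

-- Each term `t i * h (2i - 1)` is the increment `h (2i) - h (2i - 2)`, so the sum telescopes.
lemma sum_Icc_t_mul_h_odd (n : ℕ) : ∑ i ∈ Finset.Icc 1 n, t i * h (2 * i - 1) = h (2 * n) := by
  induction n with
  | zero => rfl
  | succ k ih =>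
    rw [Finset.sum_Icc_succ_top (by omega), ih, show 2 * (k + 1) - 1 = 2 * k + 1 by omega,
      show 2 * (k + 1) = 2 * k + 2 by ring, h_two_mul_add_two]
    ring

theorem stmt16 : ∀ n : ℕ, 1 ≤ n → (∑ i ∈ Finset.Icc 1 n, t i * h (2 * i - 1)) = h (2 * n) :=
  fun n _ => sum_Icc_t_mul_h_odd n
end
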